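/- Let G be an n-vertex graph whose largest independent set has size α ≥ 1. Then for all x > 0, the independence polynomial satisfies P(G,x) ≤ (1 + nx/α)^α. -/

import Mathlib

/-!
Work with the multivariate independence polynomial `Z(z) = ∑_{S independent} ∏_{v ∈ S} z v`,
so that `P(G, x) = Z(x, …, x)`. No monomial of `Z` contains both ends of an edge `uw`, so with
the other weights fixed `Z` is affine in `(z u, z w)`: moving all of `z u + z w` onto the
endpoint with the larger partial derivative does not decrease `Z`. Repeating this shrinks the
support of `z` until it is an independent set `S`, where `Z(z) = ∏_{v ∈ S} (1 + z v)`, and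
since `#S ≤ α` this is at most `(1 + (∑ z) / α) ^ α` by AM-GM.
-/

/-- A finset of vertices is independent: no edge inside. -/
def SimpleGraph.IsIndepFinset {V : Type*} (G : SimpleGraph V) (s : Finset V) : Prop :=
  ∀ v ∈ s, ∀ w ∈ s, ¬ G.Adj v w

/-- `indepCount G t` = number of independent sets of size `t` in `G`. -/
noncomputable def indepCount {V : Type*} [Fintype V] (G : SimpleGraph V) (t : ℕ) : ℕ :=
  Nat.card {s : Finset V // s.card = t ∧ G.IsIndepFinset s}

/-- `indepTotal G` = total number of independent sets in `G` (including ∅). -/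
noncomputable def indepTotal {V : Type*} [Fintype V] (G : SimpleGraph V) : ℕ :=
  Nat.card {s : Finset V // G.IsIndepFinset s}

open Classical in
/-- The independence polynomial `P(G,x) = Σ_t i_t(G) xᵗ`. -/
noncomputable def indPoly {V : Type*} [Fintype V] (G : SimpleGraph V) (x : ℝ) : ℝ :=
  ∑ s ∈ Finset.univ.filter (fun s : Finset V => G.IsIndepFinset s), x ^ s.card

open Finset

theorem prod_one_add_le_one_add_sum_div_pow {ι : Type*} (s : Finset ι) {z : ι → ℝ}
    (hz : ∀ i ∈ s, 0 ≤ z i) {n : ℕ} (hn : #s ≤ n) :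
    ∏ i ∈ s, (1 + z i) ≤ (1 + (∑ i ∈ s, z i) / n) ^ n := by
  obtain rfl | hs := s.eq_empty_or_nonempty
  · simp
  have amgm := Real.geom_mean_le_arith_mean s (fun _ => 1) (fun i => 1 + z i) (by simp)
    (by simpa using hs) (fun i hi => by linarith [hz i hi])
  simp only [Real.rpow_one, sum_const, nsmul_eq_mul, mul_one, one_mul, sum_add_distrib] at amgm
  set k := #s
  set c := ∑ i ∈ s, z i
  have hk : (0 : ℝ) < k := mod_cast hs.card_pos
  have hkn : (k : ℝ) ≤ n := mod_cast hn
  have hn0 : (n : ℝ) ≠ 0 := (hk.trans_le hkn).ne'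
  have hcn : 0 ≤ c / n := div_nonneg (sum_nonneg hz) n.cast_nonneg
  -- AM-GM gives `(1 + c / k) ^ k`; Bernoulli with exponent `n / k ≥ 1` passes to `n` factors.
  have bernoulli := one_add_mul_self_le_rpow_one_add (by linarith : -1 ≤ c / n)
    ((one_le_div hk).2 hkn)
  have hprod : 0 ≤ ∏ i ∈ s, (1 + z i) := prod_nonneg fun i hi => by linarith [hz i hi]
  calc ∏ i ∈ s, (1 + z i) = ((∏ i ∈ s, (1 + z i)) ^ (k⁻¹ : ℝ)) ^ k :=
        (Real.rpow_inv_natCast_pow hprod hs.card_pos.ne').symm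
    _ ≤ (1 + (n / k) * (c / n)) ^ k :=
        pow_le_pow_left₀ (by positivity) (amgm.trans_eq (by field_simp)) k
    _ ≤ ((1 + c / n) ^ ((n : ℝ) / k)) ^ k := by gcongr
    _ = (1 + c / n) ^ n := by
        rw [← Real.rpow_mul_natCast (by positivity), div_mul_cancel₀ _ hk.ne',
          Real.rpow_natCast]

section TransferWeight

variable {V : Type*} [DecidableEq V]

def transferWeight (z : V → ℝ) (u w : V) : V → ℝ :=
  Function.update (Function.update z u 0) w (z u + z w)

theorem transferWeight_nonneg {z : V → ℝ} (hz : 0 ≤ z) (u w : V) :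
    0 ≤ transferWeight z u w := by
  intro v
  unfold transferWeight
  rcases eq_or_ne v w with rfl | hvw
  · simpa using add_nonneg (hz u) (hz v)
  rw [Function.update_of_ne hvw]
  rcases eq_or_ne v u with rfl | hvu
  · simp
  rw [Function.update_of_ne hvu]
  exact hz v

theorem support_transferWeight_ssubset {z : V → ℝ} {u w : V} (huw : u ≠ w) (hu : z u ≠ 0)
    (hw : z w ≠ 0) : Function.support (transferWeight z u w) ⊂ Function.support z := by
  have hzu' : transferWeight z u w u = 0 := by
    rw [transferWeight, Function.update_of_ne huw, Function.update_self]
  refine ⟨fun v hv => ?_, fun h => h hu hzu'⟩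
  rcases eq_or_ne v w with rfl | hvw
  · exact hw
  rcases eq_or_ne v u with rfl | hvu
  · exact absurd hzu' hv
  rwa [Function.mem_support, transferWeight, Function.update_of_ne hvw,
    Function.update_of_ne hvu] at hv

theorem sum_transferWeight [Fintype V] (z : V → ℝ) {u w : V} (huw : u ≠ w) :
    ∑ v, transferWeight z u w v = ∑ v, z v := by
  have hu : u ∈ univ \ {w} := by simpa using huw
  rw [transferWeight, sum_update_of_mem (mem_univ w), sum_update_of_mem hu,
    sum_eq_add_sum_sdiff_singleton_of_mem (mem_univ w),
    sum_eq_add_sum_sdiff_singleton_of_mem hu]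
  ring

end TransferWeight

namespace SimpleGraph

open scoped Classical

variable {V : Type*} [Fintype V] (G : SimpleGraph V)

noncomputable def indepWeight (z : V → ℝ) : ℝ :=
  ∑ s ∈ univ.filter G.IsIndepFinset, ∏ v ∈ s, z v

noncomputable def indepWeightPartial (z : V → ℝ) (u : V) : ℝ :=
  ∑ s ∈ univ.filter (fun s => G.IsIndepFinset s ∧ u ∈ s), ∏ v ∈ s.erase u, z v

theorem indepWeight_const (x : ℝ) : G.indepWeight (fun _ => x) = indPoly G x :=
  sum_congr rfl fun _ _ => prod_const x

theorem indepWeight_eq_update_zero_add (z : V → ℝ) (u : V) :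
    G.indepWeight z = G.indepWeight (Function.update z u 0) + z u * G.indepWeightPartial z u := by
  have hpartial : z u * G.indepWeightPartial z u =
      ∑ s ∈ (univ.filter G.IsIndepFinset).filter (u ∈ ·), ∏ v ∈ s, z v := by
    rw [indepWeightPartial, filter_filter, mul_sum]
    exact sum_congr rfl fun s hs => mul_prod_erase s z (mem_filter.1 hs).2.2
  have hthrough : ∑ s ∈ (univ.filter G.IsIndepFinset).filter (u ∈ ·),
      ∏ v ∈ s, Function.update z u 0 v = 0 :=
    sum_eq_zero fun s hs => prod_eq_zero (mem_filter.1 hs).2 (Function.update_self ..)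
  have havoid : ∑ s ∈ (univ.filter G.IsIndepFinset).filter (u ∉ ·),
      ∏ v ∈ s, Function.update z u 0 v =
      ∑ s ∈ (univ.filter G.IsIndepFinset).filter (u ∉ ·), ∏ v ∈ s, z v :=
    sum_congr rfl fun s hs => prod_congr rfl fun v hv =>
      Function.update_of_ne (ne_of_mem_of_not_mem hv (mem_filter.1 hs).2) ..
  rw [indepWeight, indepWeight, ← sum_filter_add_sum_filter_not _ (u ∈ ·),
    ← sum_filter_add_sum_filter_not (univ.filter G.IsIndepFinset) (u ∈ ·), hpartial,
    hthrough, havoid]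
  ring

theorem indepWeightPartial_update (z : V → ℝ) {u v : V} (h : v = u ∨ G.Adj u v) (c : ℝ) :
    G.indepWeightPartial (Function.update z v c) u = G.indepWeightPartial z u := by
  refine sum_congr rfl fun s hs => prod_congr rfl fun x hx => Function.update_of_ne ?_ _ _
  obtain ⟨hind, hu⟩ := (mem_filter.1 hs).2
  rintro rfl
  obtain ⟨hxu, hxs⟩ := mem_erase.1 hx
  rcases h with rfl | hadj
  · exact hxu rfl
  · exact hind u hu x hxs hadj

variable {G}

theorem indepWeight_le_indepWeight_transferWeight {z : V → ℝ} {u w : V} (hadj : G.Adj u w)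
    (hu : 0 ≤ z u) (hpartial : G.indepWeightPartial z u ≤ G.indepWeightPartial z w) :
    G.indepWeight z ≤ G.indepWeight (transferWeight z u w) := by
  calc G.indepWeight z
      = G.indepWeight (Function.update (Function.update z u 0) w 0)
          + z w * G.indepWeightPartial z w + z u * G.indepWeightPartial z u := by
        rw [G.indepWeight_eq_update_zero_add z u, G.indepWeight_eq_update_zero_add _ w,
          Function.update_of_ne hadj.ne', G.indepWeightPartial_update z (.inr hadj.symm)]
    _ ≤ G.indepWeight (Function.update (Function.update z u 0) w 0)
          + (z u + z w) * G.indepWeightPartial z w := by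
        nlinarith [mul_le_mul_of_nonneg_left hpartial hu]
    _ = G.indepWeight (transferWeight z u w) := by
        rw [G.indepWeight_eq_update_zero_add (transferWeight z u w) w, transferWeight,
          Function.update_idem, Function.update_self, G.indepWeightPartial_update _ (.inl rfl),
          G.indepWeightPartial_update z (.inr hadj.symm)]

theorem indepWeight_eq_prod_one_add {S : Finset V} (hS : G.IsIndepFinset S) {z : V → ℝ}
    (hz : ∀ v ∉ S, z v = 0) : G.indepWeight z = ∏ v ∈ S, (1 + z v) := by
  rw [prod_one_add, indepWeight]
  have hsub : S.powerset ⊆ univ.filter G.IsIndepFinset := fun s hs =>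
    mem_filter.2 ⟨mem_univ s, show G.IsIndepFinset s from fun v hv w hw =>
      hS v (mem_powerset.1 hs hv) w (mem_powerset.1 hs hw)⟩
  refine (sum_subset hsub fun s _ hs => ?_).symm
  obtain ⟨v, hvs, hvS⟩ := not_subset.1 (mt mem_powerset.2 hs)
  exact prod_eq_zero hvs (hz v hvS)

theorem indepWeight_le_of_forall_card_le {α : ℕ} (hα : ∀ s, G.IsIndepFinset s → #s ≤ α)
    {z : V → ℝ} (hz : 0 ≤ z) : G.indepWeight z ≤ (1 + (∑ v, z v) / α) ^ α := by
  induction hk : (Function.support z).ncard using Nat.strong_induction_on generalizing z with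
  | _ k ih =>
  by_cases hedge : ∃ u w, z u ≠ 0 ∧ z w ≠ 0 ∧ G.Adj u w
  · obtain ⟨u, w, hu, hw, hadj⟩ := hedge
    wlog hpartial : G.indepWeightPartial z u ≤ G.indepWeightPartial z w generalizing u w
    · exact this w u hw hu hadj.symm (le_of_not_ge hpartial)
    have hlt := Set.ncard_lt_ncard (support_transferWeight_ssubset hadj.ne hu hw)
    calc G.indepWeight z ≤ G.indepWeight (transferWeight z u w) :=
          indepWeight_le_indepWeight_transferWeight hadj (hz u) hpartial
      _ ≤ (1 + (∑ v, transferWeight z u w v) / α) ^ α :=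
          ih _ (hk ▸ hlt) (transferWeight_nonneg hz u w) rfl
      _ = (1 + (∑ v, z v) / α) ^ α := by rw [sum_transferWeight z hadj.ne]
  · push Not at hedge
    set S := univ.filter (z · ≠ 0)
    have hS : G.IsIndepFinset S := fun u hu w hw =>
      hedge u w (mem_filter.1 hu).2 (mem_filter.1 hw).2
    have hzS : ∀ v ∉ S, z v = 0 := fun v hv => by simpa [S] using hv
    rw [G.indepWeight_eq_prod_one_add hS hzS, ← sum_subset (subset_univ S) fun v _ => hzS v]
    exact prod_one_add_le_one_add_sum_div_pow S (fun v _ => hz v) (hα S hS)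

end SimpleGraph

theorem indPoly_le_of_indepNum_general {V : Type*} [Fintype V] (G : SimpleGraph V) (n α : ℕ)
    (hcard : Fintype.card V = n)
    (hα : IsGreatest {k : ℕ | ∃ s : Finset V, s.card = k ∧ G.IsIndepFinset s} α)
    (x : ℝ) (hx : 0 < x) :
    indPoly G x ≤ (1 + n * x / α) ^ α := by
  have hbound := G.indepWeight_le_of_forall_card_le (fun s hs => hα.2 ⟨s, rfl, hs⟩)
    (fun _ => hx.le : 0 ≤ fun _ : V => x)
  rwa [G.indepWeight_const, sum_const, card_univ, hcard, nsmul_eq_mul] at hbound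

theorem indPoly_le_of_indepNum {V : Type*} [Fintype V] (G : SimpleGraph V) (n α : ℕ)
    (hcard : Fintype.card V = n) (hα1 : 1 ≤ α)
    (hα : IsGreatest {k : ℕ | ∃ s : Finset V, s.card = k ∧ G.IsIndepFinset s} α)
    (x : ℝ) (hx : 0 < x) :
    indPoly G x ≤ (1 + n * x / α) ^ α :=
  indPoly_le_of_indepNum_general G n α hcard hα x hx
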